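/- Let p be a prime with p ≡ 5 (mod 6) and let k be a field of characteristic p. In k[X₁,X₂,X₃,X₄], let κ = X₂²X₄² − 4X₁X₃X₄² + 4X₁³X₄ − 4X₃³X₄ + 4X₁²X₃² − 8X₁X₂²X₃ + 4X₂⁴. Then the coefficient of X₁^{p−1}X₃^{2(p−1)}X₄^{p−1} in κ^{p−1} is zero, and the coefficient of X₁^{2(p−1)}X₃^{p−1}X₄^{p−1} in κ^{p−1} is zero. -/

import Mathlib

/-!
Give `X₁` weight `1`, `X₃` weight `2` and `X₂, X₄` weight `0` in `ZMod 3`. Every monomial of `κ`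
then has weight `0`, so `κ^{p−1}` is weighted homogeneous of weight `0`. The two monomials in
question have weights `5(p−1)` and `4(p−1)`, which are nonzero mod `3` because `p ≡ 2 (mod 3)`.
-/

open MvPolynomial

noncomputable section Stmt3

/-- Exponent vector `(i₁,i₂,i₃,i₄)` for the variables `X₁,X₂,X₃,X₄`. -/
def expv (i1 i2 i3 i4 : ℕ) : Fin 4 →₀ ℕ := Finsupp.equivFunOnFinite.symm ![i1, i2, i3, i4]

variable (k : Type*) [Field k]

/-- The Kummer quartic surface `κ` of the genus-2 curve `z² = x⁶ − 1`, in the variables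
`X₁ = X 0, X₂ = X 1, X₃ = X 2, X₄ = X 3` over `k`. -/
def kappaK : MvPolynomial (Fin 4) k :=
  X 1 ^ 2 * X 3 ^ 2 - 4 * X 0 * X 2 * X 3 ^ 2 + 4 * X 0 ^ 3 * X 3 - 4 * X 2 ^ 3 * X 3
    + 4 * X 0 ^ 2 * X 2 ^ 2 - 8 * X 0 * X 1 ^ 2 * X 2 + 4 * X 1 ^ 4

def weightMod3 : Fin 4 → ZMod 3 := ![1, 0, 2, 0]

theorem weight_weightMod3_expv (a b c d : ℕ) :
    Finsupp.weight weightMod3 (expv a b c d) = a + 2 * c := by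
  simp [Finsupp.weight_apply, Finsupp.sum_fintype, expv, Fin.sum_univ_four, weightMod3, mul_comm]

theorem isWeightedHomogeneous_kappaK : (kappaK k).IsWeightedHomogeneous weightMod3 0 := by
  have hX (i : Fin 4) :
      (X i : MvPolynomial (Fin 4) k).IsWeightedHomogeneous weightMod3 (weightMod3 i) :=
    isWeightedHomogeneous_X k _ i
  -- each term's weight, e.g. `3 • weightMod3 0 + weightMod3 3`, is definitionally `0` in `ZMod 3`
  refine (((((?_ : IsWeightedHomogeneous _ _ _).sub ?_).add ?_).sub ?_).add ?_).sub ?_ |>.add ?_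
  · exact ((hX 1).pow 2).mul ((hX 3).pow 2)
  · exact (((hX 0).C_mul 4).mul (hX 2)).mul ((hX 3).pow 2)
  · exact ((hX 0).pow 3).C_mul 4 |>.mul (hX 3)
  · exact ((hX 2).pow 3).C_mul 4 |>.mul (hX 3)
  · exact ((hX 0).pow 2).C_mul 4 |>.mul ((hX 2).pow 2)
  · exact (((hX 0).C_mul 8).mul ((hX 1).pow 2)).mul (hX 2)
  · exact ((hX 1).pow 4).C_mul 4

theorem stmt3 (p : ℕ) (hp5 : p % 6 = 5) :
    coeff (expv (p - 1) 0 (2 * (p - 1)) (p - 1)) ((kappaK k) ^ (p - 1)) = 0 ∧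
    coeff (expv (2 * (p - 1)) 0 (p - 1) (p - 1)) ((kappaK k) ^ (p - 1)) = 0 := by
  have hκ : ((kappaK k) ^ (p - 1)).IsWeightedHomogeneous weightMod3 0 := by
    simpa using (isWeightedHomogeneous_kappaK k).pow (p - 1)
  have hp : ((p - 1 : ℕ) : ZMod 3) = 1 := by
    rw [← ZMod.natCast_mod, show (p - 1) % 3 = 1 by omega, Nat.cast_one]
  constructor <;> apply hκ.coeff_eq_zero <;>
    simp only [weight_weightMod3_expv, Nat.cast_mul, Nat.cast_ofNat, hp] <;> decide

end Stmt3
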